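/- Let A = diag(A₀, 0) with A₀ a p₀×p₀ symmetric positive definite matrix, and let B be in the stratified block form with each block B_j of rank p_j (Kalman condition). Then C(t) = ∫₀ᵗ exp(-sB) A exp(-sBᵀ) ds is positive definite (invertible, with ⟨C(t)v,v⟩ > 0 for all v ≠ 0) for every t > 0. -/

import Mathlib

open MeasureTheory Matrix Real Filter Topology ENNReal

namespace Kolmo

/-- Coordinate `i` belongs to block number `j` of the partition given by the block sizes `p`. -/
def inBlock (p : ℕ → ℕ) (j i : ℕ) : Prop :=
  (∑ k ∈ Finset.range j, p k) ≤ i ∧ i < ∑ k ∈ Finset.range (j + 1), p k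

/-- The data of a Kolmogorov operator `L = div(A ∇) + ⟨Bx, ∇⟩ - ∂ₜ` in ℝⁿ × ℝ:
`A = diag(A₀, 0)` with `A₀` symmetric positive definite of size `p 0`, and `B` in
stratified block form with blocks `B_j` of size `p j × p (j-1)` and full rank `p j`. -/
structure Setup (n : ℕ) where
  r : ℕ
  p : ℕ → ℕ
  A : Matrix (Fin n) (Fin n) ℝ
  B : Matrix (Fin n) (Fin n) ℝ
  hp_zero : ∀ j, r < j → p j = 0
  hp_pos : ∀ j ≤ r, 0 < p j
  hp_mono : ∀ j ≤ r, ∀ k ≤ j, p j ≤ p k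
  hp_sum : (∑ j ∈ Finset.range (r + 1), p j) = n
  hA_psd : A.PosSemidef
  hA_block : ∀ i j : Fin n, ¬(inBlock p 0 i ∧ inBlock p 0 j) → A i j = 0
  hA0_pd : ∀ v : Fin n → ℝ, v ≠ 0 → (∀ i : Fin n, ¬inBlock p 0 i → v i = 0) →
      0 < A.mulVec v ⬝ᵥ v
  hB_block : ∀ i j : Fin n,
      (¬∃ k, 1 ≤ k ∧ k ≤ r ∧ inBlock p k (i : ℕ) ∧ inBlock p (k - 1) (j : ℕ)) → B i j = 0
  hB_rank : ∀ k, 1 ≤ k → k ≤ r → ∀ v : Fin n → ℝ,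
      (∀ i : Fin n, ¬inBlock p k (i : ℕ) → v i = 0) →
      ∃ w : Fin n → ℝ, (∀ i : Fin n, ¬inBlock p (k - 1) (i : ℕ) → w i = 0) ∧
        ∀ i : Fin n, inBlock p k (i : ℕ) → B.mulVec w i = v i

variable {n : ℕ}

/-- `E(τ) = exp(-τ B)`. -/
noncomputable def E (S : Setup n) (τ : ℝ) : Matrix (Fin n) (Fin n) ℝ :=
  NormedSpace.exp (-(τ • S.B))

/-- The group law `(x,t) ∘ (ξ,τ) = (ξ + E(τ) x, t + τ)` of the Kolmogorov group `𝕂`. -/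
noncomputable def mul (S : Setup n) (z w : (Fin n → ℝ) × ℝ) : (Fin n → ℝ) × ℝ :=
  (w.1 + (E S w.2).mulVec z.1, z.2 + w.2)

/-- The inverse `(x,t)⁻¹ = (-E(-t) x, -t)` in the Kolmogorov group. -/
noncomputable def inv (S : Setup n) (z : (Fin n → ℝ) × ℝ) : (Fin n → ℝ) × ℝ :=
  (-(E S (-z.2)).mulVec z.1, -z.2)

/-- The covariance matrix `C(t) = ∫₀ᵗ E(s) A E(s)ᵀ ds`. -/
noncomputable def Cmat (S : Setup n) (t : ℝ) : Matrix (Fin n) (Fin n) ℝ :=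
  Matrix.of fun i j => ∫ s in (0 : ℝ)..t, (E S s * S.A * (E S s)ᵀ) i j

/-- The fundamental solution with pole at the origin:
`γ(x,t) = (4π)^{-n/2} (det C(t))^{-1/2} exp(-¼⟨C(t)⁻¹ x, x⟩)` for `t > 0`, `0` for `t ≤ 0`. -/
noncomputable def gamma (S : Setup n) (z : (Fin n → ℝ) × ℝ) : ℝ :=
  if z.2 ≤ 0 then 0
  else (4 * π) ^ (-(n : ℝ) / 2) * (Real.sqrt (Cmat S z.2).det)⁻¹ *
    Real.exp (-(1 / 4) * ((Cmat S z.2)⁻¹.mulVec z.1 ⬝ᵥ z.1))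

/-- The fundamental solution `Γ(z, ζ) = γ(ζ⁻¹ ∘ z)`. -/
noncomputable def Gamma (S : Setup n) (z ζ : (Fin n → ℝ) × ℝ) : ℝ :=
  gamma S (mul S (inv S ζ) z)

/-- The mean value kernel `W(x,t) = ¼ ⟨A C(t)⁻¹ x, C(t)⁻¹ x⟩`. -/
noncomputable def Wker (S : Setup n) (z : (Fin n → ℝ) × ℝ) : ℝ :=
  (S.A.mulVec ((Cmat S z.2)⁻¹.mulVec z.1) ⬝ᵥ (Cmat S z.2)⁻¹.mulVec z.1) / 4

/-- The `L`-ball `Ω_r(z₀) = {z : Γ(z₀, z) > 1/r}`. -/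
noncomputable def Lball (S : Setup n) (z₀ : (Fin n → ℝ) × ℝ) (r : ℝ) : Set ((Fin n → ℝ) × ℝ) :=
  {z | 1 / r < Gamma S z₀ z}

/-- The homogeneous dimension `Q = p₀ + 3 p₁ + ⋯ + (2r+1) p_r + 2`. -/
noncomputable def Q (S : Setup n) : ℝ :=
  (∑ j ∈ Finset.range (S.r + 1), (2 * (j : ℝ) + 1) * (S.p j : ℝ)) + 2

/-- The Kolmogorov operator `L u = div(A ∇u) + ⟨Bx, ∇u⟩ - ∂ₜ u` (for constant `A`). -/
noncomputable def Lop (S : Setup n) (u : ((Fin n → ℝ) × ℝ) → ℝ) (z : (Fin n → ℝ) × ℝ) : ℝ :=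
  (∑ i : Fin n, ∑ j : Fin n, S.A i j *
      fderiv ℝ (fun w => fderiv ℝ u w ((Pi.single j 1 : Fin n → ℝ), 0)) z
        ((Pi.single i 1 : Fin n → ℝ), 0)) +
    (S.B.mulVec z.1 ⬝ᵥ fun i => fderiv ℝ u z ((Pi.single i 1 : Fin n → ℝ), 0)) -
      fderiv ℝ u z (0, 1)

/-- The adjoint operator `L* u = div(A ∇u) - ⟨Bx, ∇u⟩ + ∂ₜ u`. -/
noncomputable def LStarop (S : Setup n) (u : ((Fin n → ℝ) × ℝ) → ℝ) (z : (Fin n → ℝ) × ℝ) : ℝ :=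
  (∑ i : Fin n, ∑ j : Fin n, S.A i j *
      fderiv ℝ (fun w => fderiv ℝ u w ((Pi.single j 1 : Fin n → ℝ), 0)) z
        ((Pi.single i 1 : Fin n → ℝ), 0)) -
    (S.B.mulVec z.1 ⬝ᵥ fun i => fderiv ℝ u z ((Pi.single i 1 : Fin n → ℝ), 0)) +
      fderiv ℝ u z (0, 1)

/-- `u` is `L`-harmonic on `O`: smooth with `L u = 0` on `O`. -/
def IsLHarmonicOn (S : Setup n) (u : ((Fin n → ℝ) × ℝ) → ℝ) (O : Set ((Fin n → ℝ) × ℝ)) : Prop :=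
  ContDiffOn ℝ (⊤ : ℕ∞) u O ∧ ∀ z ∈ O, Lop S u z = 0

/-- `u` is `L*`-harmonic on `O`: smooth with `L* u = 0` on `O`. -/
def IsLStarHarmonicOn (S : Setup n) (u : ((Fin n → ℝ) × ℝ) → ℝ)
    (O : Set ((Fin n → ℝ) × ℝ)) : Prop :=
  ContDiffOn ℝ (⊤ : ℕ∞) u O ∧ ∀ z ∈ O, LStarop S u z = 0

/-- `h` solves the Dirichlet problem for `L*` on `V` with boundary datum `φ`. -/
def DirichletSolOn (S : Setup n) (V : Set ((Fin n → ℝ) × ℝ))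
    (φ h : ((Fin n → ℝ) × ℝ) → ℝ) : Prop :=
  IsLStarHarmonicOn S h V ∧ ∀ ζ ∈ frontier V, Tendsto h (𝓝[V] ζ) (𝓝 (φ ζ))

/-- `V` is `L*`-regular: for every continuous boundary datum the Dirichlet problem for `L*`
has a solution, unique on `V`. -/
def IsLStarRegular (S : Setup n) (V : Set ((Fin n → ℝ) × ℝ)) : Prop :=
  IsOpen V ∧ Bornology.IsBounded V ∧
    ∀ φ : ((Fin n → ℝ) × ℝ) → ℝ, ContinuousOn φ (frontier V) →
      (∃ h, DirichletSolOn S V φ h) ∧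
      ∀ h₁ h₂, DirichletSolOn S V φ h₁ → DirichletSolOn S V φ h₂ → Set.EqOn h₁ h₂ V

/-- `u : Ω → [-∞, ∞)` is `L*`-subharmonic on the open set `Ω`. -/
def IsLStarSubharmonicOn (S : Setup n) (u : ((Fin n → ℝ) × ℝ) → EReal)
    (Ω : Set ((Fin n → ℝ) × ℝ)) : Prop :=
  UpperSemicontinuousOn u Ω ∧ (∀ z ∈ Ω, u z ≠ ⊤) ∧
    (∀ z ∈ Ω, z ∈ closure {w ∈ Ω | u w ≠ ⊥}) ∧
    ∀ V, IsLStarRegular S V → closure V ⊆ Ω →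
      ∀ φ h, ContinuousOn φ (frontier V) → DirichletSolOn S V φ h →
        (∀ ζ ∈ frontier V, u ζ ≤ (φ ζ : EReal)) → ∀ z ∈ V, u z ≤ (h z : EReal)

/-- The support of a measure: points all of whose open neighborhoods have positive measure. -/
def msupp (μ : Measure ((Fin n → ℝ) × ℝ)) : Set ((Fin n → ℝ) × ℝ) :=
  {z | ∀ U : Set ((Fin n → ℝ) × ℝ), z ∈ U → IsOpen U → 0 < μ U}

/-- The `Γ`-potential `Γ_μ(z) = ∫ Γ(z,ζ) dμ(ζ)` of a nonnegative measure, with values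
in `[0,∞]`. -/
noncomputable def GammaPot (S : Setup n) (μ : Measure ((Fin n → ℝ) × ℝ))
    (z : (Fin n → ℝ) × ℝ) : ℝ≥0∞ :=
  ∫⁻ ζ, ENNReal.ofReal (Gamma S z ζ) ∂μ

end Kolmo


namespace KolmoAux
open Kolmo MeasureTheory Matrix intervalIntegral

variable {n : ℕ}

instance (p : ℕ → ℕ) (j i : ℕ) : Decidable (inBlock p j i) := by
  unfold inBlock; exact instDecidableAnd

lemma psum_mono (p : ℕ → ℕ) {a b : ℕ} (h : a ≤ b) :
    (∑ k ∈ Finset.range a, p k) ≤ ∑ k ∈ Finset.range b, p k :=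
  Finset.sum_le_sum_of_subset (Finset.range_subset_range.mpr h)

noncomputable def blk (S : Setup n) (i : Fin n) : ℕ :=
  Nat.findGreatest (fun m => (∑ k ∈ Finset.range m, S.p k) ≤ (i : ℕ)) S.r

lemma blk_le (S : Setup n) (i : Fin n) : blk S i ≤ S.r := Nat.findGreatest_le _

lemma inBlock_blk (S : Setup n) (i : Fin n) : inBlock S.p (blk S i) (i : ℕ) := by
  constructor
  · exact Nat.findGreatest_spec (P := fun m => (∑ k ∈ Finset.range m, S.p k) ≤ (i : ℕ))
      (Nat.zero_le _) (by simp)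
  · by_cases h : blk S i = S.r
    · rw [h, S.hp_sum]; exact i.isLt
    · have h1 : blk S i + 1 ≤ S.r := by have := blk_le S i; omega
      have h2 := Nat.findGreatest_is_greatest (P := fun m => (∑ k ∈ Finset.range m, S.p k) ≤ (i : ℕ))
        (lt_add_one (blk S i)) h1
      omega

lemma inBlock_unique (p : ℕ → ℕ) {j j' i : ℕ} (h : inBlock p j i) (h' : inBlock p j' i) :
    j = j' := by
  by_contra hne
  rcases Nat.lt_or_ge j j' with hlt | hge
  · have h3 := le_trans (psum_mono p (by omega : j + 1 ≤ j')) h'.1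
    have h4 := h.2
    omega
  · have h3 := le_trans (psum_mono p (by omega : j' + 1 ≤ j)) h.1
    have h4 := h'.2
    omega

lemma blk_eq (S : Setup n) {j : ℕ} {i : Fin n} (h : inBlock S.p j (i : ℕ)) : blk S i = j :=
  inBlock_unique S.p (inBlock_blk S i) h

lemma B_apply_ne_zero (S : Setup n) {i j : Fin n} (h : S.B i j ≠ 0) :
    blk S i = blk S j + 1 ∧ 1 ≤ blk S i := by
  by_contra hne
  apply h
  apply S.hB_block
  rintro ⟨k, hk1, hkr, hik, hjk⟩
  have h1 : blk S i = k := blk_eq S hik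
  have h2 : blk S j = k - 1 := blk_eq S hjk
  omega

lemma Bpow_apply_ne_zero (S : Setup n) (m : ℕ) {i j : Fin n}
    (h : (S.B ^ m) i j ≠ 0) : blk S i = blk S j + m := by
  induction m generalizing i j with
  | zero =>
    rw [pow_zero] at h
    by_cases hij : i = j
    · subst hij; omega
    · simp [Matrix.one_apply_ne hij] at h
  | succ m ih =>
    rw [pow_succ, Matrix.mul_apply] at h
    obtain ⟨l, -, hl⟩ := Finset.exists_ne_zero_of_sum_ne_zero h
    have h1 := ih (left_ne_zero_of_mul hl)
    have h2 := (B_apply_ne_zero S (right_ne_zero_of_mul hl)).1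
    omega

lemma B_nilpotent (S : Setup n) : S.B ^ (S.r + 1) = 0 := by
  ext i j
  simp only [Matrix.zero_apply]
  by_contra h
  have h1 := Bpow_apply_ne_zero S (S.r + 1) h
  have h2 := blk_le S i
  omega

lemma E_eq (S : Setup n) (τ : ℝ) :
    E S τ = ∑ k ∈ Finset.range (S.r + 1), ((k.factorial : ℝ)⁻¹ * (-τ) ^ k) • S.B ^ k := by
  rw [Kolmo.E, NormedSpace.exp_eq_tsum ℝ]; beta_reduce
  rw [tsum_eq_sum (s := Finset.range (S.r + 1)) ?_]
  · refine Finset.sum_congr rfl fun k _ => ?_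
    rw [show -(τ • S.B) = (-τ) • S.B by module, smul_pow, smul_smul]
  · intro k hk
    have hk' : S.r + 1 ≤ k := by simpa using hk
    have hB : S.B ^ k = 0 := by
      calc S.B ^ k = S.B ^ (S.r + 1) * S.B ^ (k - (S.r + 1)) := by
            rw [← pow_add]; congr 1; omega
        _ = 0 := by rw [B_nilpotent, zero_mul]
    rw [show -(τ • S.B) = (-τ) • S.B by module, smul_pow, hB, smul_zero, smul_zero]

lemma continuous_E (S : Setup n) : Continuous fun s => E S s := by
  simp only [E_eq]
  exact continuous_finset_sum _ fun k _ =>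
    (Continuous.smul (continuous_const.mul (continuous_neg.pow k)) continuous_const)

lemma continuous_F (S : Setup n) :
    Continuous fun s => E S s * S.A * (E S s)ᵀ :=
  ((continuous_E S).matrix_mul continuous_const).matrix_mul (continuous_E S).matrix_transpose

lemma mulVec_dot (M : Matrix (Fin n) (Fin n) ℝ) (x v : Fin n → ℝ) :
    M.mulVec x ⬝ᵥ v = x ⬝ᵥ Mᵀ.mulVec v := by
  rw [dotProduct_comm, Matrix.dotProduct_mulVec, ← Matrix.mulVec_transpose,
    dotProduct_comm]

lemma F_quad (M A : Matrix (Fin n) (Fin n) ℝ) (v : Fin n → ℝ) :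
    (M * A * Mᵀ).mulVec v ⬝ᵥ v = A.mulVec (Mᵀ.mulVec v) ⬝ᵥ (Mᵀ.mulVec v) := by
  rw [← Matrix.mulVec_mulVec, ← Matrix.mulVec_mulVec, mulVec_dot]

lemma Cmat_quad (S : Setup n) (t : ℝ) (v : Fin n → ℝ) :
    (Cmat S t).mulVec v ⬝ᵥ v
      = ∫ s in (0:ℝ)..t, (E S s * S.A * (E S s)ᵀ).mulVec v ⬝ᵥ v := by
  have hc : ∀ i j : Fin n, Continuous fun s => (E S s * S.A * (E S s)ᵀ) i j :=
    fun i j => (continuous_F S).matrix_elem i j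
  symm
  calc ∫ s in (0:ℝ)..t, (E S s * S.A * (E S s)ᵀ).mulVec v ⬝ᵥ v
      = ∫ s in (0:ℝ)..t, ∑ i, (∑ j, (E S s * S.A * (E S s)ᵀ) i j * v j) * v i := by
        simp [Matrix.mulVec, dotProduct]
    _ = ∑ i, ∫ s in (0:ℝ)..t, (∑ j, (E S s * S.A * (E S s)ᵀ) i j * v j) * v i := by
        refine intervalIntegral.integral_finset_sum fun i _ => ?_
        exact (((continuous_finset_sum _ fun j _ => (hc i j).mul continuous_const).mul
          continuous_const)).intervalIntegrable 0 t
    _ = ∑ i, (∫ s in (0:ℝ)..t, ∑ j, (E S s * S.A * (E S s)ᵀ) i j * v j) * v i := by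
        refine Finset.sum_congr rfl fun i _ => ?_
        exact intervalIntegral.integral_mul_const _ _
    _ = ∑ i, (∑ j, (∫ s in (0:ℝ)..t, (E S s * S.A * (E S s)ᵀ) i j) * v j) * v i := by
        refine Finset.sum_congr rfl fun i _ => ?_
        congr 1
        rw [intervalIntegral.integral_finset_sum (f := fun j s => (E S s * S.A * (E S s)ᵀ) i j * v j) fun j _ =>
          ((hc i j).mul continuous_const).intervalIntegrable 0 t]
        exact Finset.sum_congr rfl fun j _ => intervalIntegral.integral_mul_const _ _
    _ = (Cmat S t).mulVec v ⬝ᵥ v := by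
        simp [Cmat, Matrix.mulVec, dotProduct]

lemma q_nonneg (S : Setup n) (s : ℝ) (v : Fin n → ℝ) :
    0 ≤ (E S s * S.A * (E S s)ᵀ).mulVec v ⬝ᵥ v := by
  rw [F_quad]
  have h := S.hA_psd.dotProduct_mulVec_nonneg ((E S s)ᵀ.mulVec v)
  simpa [dotProduct_comm] using h

lemma A_transpose (S : Setup n) : S.Aᵀ = S.A := by
  have h := S.hA_psd.1
  ext i j
  have := congrFun (congrFun h i) j
  simpa [Matrix.conjTranspose_apply] using this

lemma Cmat_isHermitian (S : Setup n) (t : ℝ) : (Cmat S t).IsHermitian := by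
  have hsymm : ∀ s : ℝ, (E S s * S.A * (E S s)ᵀ)ᵀ = E S s * S.A * (E S s)ᵀ := by
    intro s
    rw [Matrix.transpose_mul, Matrix.transpose_mul, Matrix.transpose_transpose,
      A_transpose, ← Matrix.mul_assoc]
  ext i j
  simp only [Matrix.conjTranspose_apply, star_trivial, Cmat, Matrix.of_apply]
  refine intervalIntegral.integral_congr fun s _ => ?_
  conv_lhs => rw [← hsymm s]
  rfl

lemma A_quad_mask (S : Setup n) (x : Fin n → ℝ) :
    S.A.mulVec x ⬝ᵥ x =
      S.A.mulVec (fun i => if inBlock S.p 0 (i : ℕ) then x i else 0) ⬝ᵥ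
        (fun i => if inBlock S.p 0 (i : ℕ) then x i else 0) := by
  classical
  simp only [Matrix.mulVec, dotProduct]
  refine Finset.sum_congr rfl fun i _ => ?_
  by_cases hi : inBlock S.p 0 (i : ℕ)
  · simp only [hi, if_true]
    refine congrArg (· * x i) ?_
    refine Finset.sum_congr rfl fun j _ => ?_
    by_cases hj : inBlock S.p 0 (j : ℕ)
    · simp [hj]
    · simp [hj, S.hA_block i j (by tauto)]
  · have hz : ∀ j : Fin n, S.A i j = 0 := fun j => S.hA_block i j (by tauto)
    simp [hi, hz]

lemma block0_zero_of_quad_zero (S : Setup n) (x : Fin n → ℝ)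
    (h : S.A.mulVec x ⬝ᵥ x = 0) : ∀ i : Fin n, inBlock S.p 0 (i : ℕ) → x i = 0 := by
  classical
  intro i hi
  by_contra hxi
  set y : Fin n → ℝ := fun l => if inBlock S.p 0 (l : ℕ) then x l else 0 with hy
  have hy0 : y ≠ 0 := by
    intro h0
    apply hxi
    have := congrFun h0 i
    simpa [hy, hi] using this
  have hpos := S.hA0_pd y hy0 (fun j hj => by simp [hy, hj])
  rw [A_quad_mask] at h
  rw [h] at hpos
  exact lt_irrefl _ hpos

lemma w_apply (S : Setup n) (s : ℝ) (v : Fin n → ℝ) (i : Fin n) :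
    (E S s)ᵀ.mulVec v i
      = ∑ k ∈ Finset.range (S.r + 1),
          ((k.factorial : ℝ)⁻¹ * (-1) ^ k * ((S.B ^ k)ᵀ.mulVec v i)) * s ^ k := by
  rw [E_eq]
  simp only [Matrix.mulVec, dotProduct, Matrix.transpose_apply, Matrix.sum_apply,
    Matrix.smul_apply, smul_eq_mul, Finset.sum_mul, Finset.mul_sum]
  rw [Finset.sum_comm]
  refine Finset.sum_congr rfl fun k _ => ?_
  refine Finset.sum_congr rfl fun j _ => ?_
  rw [neg_pow]
  ring

lemma pow_coeff_zero (S : Setup n) {t : ℝ} (ht : 0 < t) (v : Fin n → ℝ)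
    (h : ∀ s ∈ Set.Ioo (0:ℝ) t, ∀ i : Fin n, inBlock S.p 0 (i : ℕ) →
      (E S s)ᵀ.mulVec v i = 0) :
    ∀ k ≤ S.r, ∀ i : Fin n, inBlock S.p 0 (i : ℕ) → (S.B ^ k)ᵀ.mulVec v i = 0 := by
  intro k hk i hi
  classical
  set a : ℕ → ℝ := fun m => (m.factorial : ℝ)⁻¹ * (-1) ^ m * ((S.B ^ m)ᵀ.mulVec v i) with ha
  set P : Polynomial ℝ :=
    ∑ m ∈ Finset.range (S.r + 1), Polynomial.C (a m) * Polynomial.X ^ m with hP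
  have hroots : ∀ s ∈ Set.Ioo (0:ℝ) t, P.IsRoot s := by
    intro s hs
    have hws := h s hs i hi
    rw [w_apply] at hws
    simpa [hP, Polynomial.IsRoot, Polynomial.eval_finset_sum, ha] using hws
  have hP0 : P = 0 :=
    Polynomial.eq_zero_of_infinite_isRoot P
      ((Set.Ioo_infinite ht).mono (fun s hs => hroots s hs))
  have hck : P.coeff k = a k := by
    rw [hP, Polynomial.finset_sum_coeff]
    rw [Finset.sum_eq_single k]
    · simp [Polynomial.coeff_C_mul, Polynomial.coeff_X_pow]
    · intro b _ hb
      simp only [Polynomial.coeff_C_mul, Polynomial.coeff_X_pow]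
      rw [if_neg (fun h : k = b => hb h.symm), mul_zero]

    · intro hk'
      exact absurd (Finset.mem_range.mpr (by omega)) hk'
  have hak : a k = 0 := by rw [← hck, hP0]; simp
  rw [ha] at hak
  simp only [mul_assoc] at hak
  rcases mul_eq_zero.mp hak with h1 | h2
  · exact absurd h1 (inv_ne_zero (Nat.cast_ne_zero.mpr (Nat.factorial_ne_zero k)))
  · rcases mul_eq_zero.mp h2 with h3 | h4
    · exact absurd h3 (pow_ne_zero _ (by norm_num))
    · exact h4

lemma kalman_claim (S : Setup n) : ∀ k, k ≤ S.r → ∀ u : Fin n → ℝ,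
    (∀ j : Fin n, blk S j ≠ k → u j = 0) →
    (∀ i : Fin n, blk S i = 0 → (S.B ^ k)ᵀ.mulVec u i = 0) → u = 0 := by
  intro k
  induction k with
  | zero =>
    intro _ u hsupp h0
    funext j
    by_cases hj : blk S j = 0
    · have := h0 j hj
      simpa using this
    · exact hsupp j hj
  | succ k ih =>
    intro hk u hsupp h0
    set u' : Fin n → ℝ := S.Bᵀ.mulVec u with hu'
    have hsupp' : ∀ j : Fin n, blk S j ≠ k → u' j = 0 := by
      intro j hj
      simp only [hu', Matrix.mulVec, dotProduct, Matrix.transpose_apply]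
      refine Finset.sum_eq_zero fun l _ => ?_
      by_cases hB : S.B l j = 0
      · rw [hB, zero_mul]
      · have hbl := (B_apply_ne_zero S hB).1
        by_cases hl : blk S l = k + 1
        · exact absurd (by omega : blk S j = k) hj
        · rw [hsupp l (by omega), mul_zero]
    have h0' : ∀ i : Fin n, blk S i = 0 → (S.B ^ k)ᵀ.mulVec u' i = 0 := by
      intro i hi
      have hcomp := h0 i hi
      rw [pow_succ', Matrix.transpose_mul, ← Matrix.mulVec_mulVec] at hcomp
      exact hcomp
    have hu'0 : u' = 0 := ih (by omega) u' hsupp' h0'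
    have hsupp2 : ∀ i : Fin n, ¬ inBlock S.p (k + 1) (i : ℕ) → u i = 0 := by
      intro i hi
      apply hsupp
      intro hb
      exact hi (hb ▸ inBlock_blk S i)
    obtain ⟨w, hwsupp, hwB⟩ := S.hB_rank (k + 1) (by omega) hk u hsupp2
    have key : u ⬝ᵥ u = 0 := by
      have h1 : u ⬝ᵥ u = u ⬝ᵥ S.B.mulVec w := by
        simp only [dotProduct]
        refine Finset.sum_congr rfl fun i _ => ?_
        by_cases hi : inBlock S.p (k + 1) (i : ℕ)
        · rw [hwB i hi]
        · rw [hsupp2 i hi]; ring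
      rw [h1, Matrix.dotProduct_mulVec]
      have h2 : u ᵥ* S.B = u' := by rw [hu', Matrix.mulVec_transpose]
      rw [h2, hu'0]
      simp
    funext i
    have hsum : ∑ l : Fin n, u l * u l = 0 := key
    have := (Finset.sum_eq_zero_iff_of_nonneg
      (fun l _ => mul_self_nonneg (u l))).mp hsum i (Finset.mem_univ i)
    exact mul_self_eq_zero.mp this

lemma v_blocks_zero (S : Setup n) (v : Fin n → ℝ)
    (h : ∀ k ≤ S.r, ∀ i : Fin n, inBlock S.p 0 (i : ℕ) → (S.B ^ k)ᵀ.mulVec v i = 0) :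
    v = 0 := by
  classical
  funext j
  have hk : blk S j ≤ S.r := blk_le S j
  set k := blk S j with hkdef
  set u : Fin n → ℝ := fun l => if blk S l = k then v l else 0 with hu
  have husupp : ∀ l : Fin n, blk S l ≠ k → u l = 0 := fun l hl => by simp [hu, hl]
  have h0 : ∀ i : Fin n, blk S i = 0 → (S.B ^ k)ᵀ.mulVec u i = 0 := by
    intro i hi
    have heq : (S.B ^ k)ᵀ.mulVec u i = (S.B ^ k)ᵀ.mulVec v i := by
      simp only [Matrix.mulVec, dotProduct, Matrix.transpose_apply]
      refine Finset.sum_congr rfl fun l _ => ?_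
      by_cases hl : blk S l = k
      · simp [hu, hl]
      · by_cases hB : (S.B ^ k) l i = 0
        · rw [hB]; ring
        · have := Bpow_apply_ne_zero S k hB
          exact absurd (by omega : blk S l = k) hl
    rw [heq]
    exact h k hk i (by rw [show (0:ℕ) = blk S i from hi.symm]; exact inBlock_blk S i)
  have hu0 := kalman_claim S k hk u husupp h0
  have := congrFun hu0 j
  simp [hu] at this; exact this rfl

end KolmoAux

open Kolmo in
/-- **Positive definiteness of the covariance matrix under the Kalman condition.**
With `A = diag(A₀, 0)`, `A₀ ≻ 0` of size `p₀`, and `B` in stratified block form with blocks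
of full rank `p j`, the matrix `C(t) = ∫₀ᵗ exp(-sB) A exp(-sBᵀ) ds` is positive definite
(in particular invertible) for every `t > 0`. -/
theorem covMatrix_posDef_of_kalman (n : ℕ) (S : Kolmo.Setup n) :
    ∀ t : ℝ, 0 < t → (Kolmo.Cmat S t).PosDef ∧ IsUnit (Kolmo.Cmat S t) := by
  intro t ht
  have hkey : ∀ v : Fin n → ℝ, v ≠ 0 → 0 < (Kolmo.Cmat S t).mulVec v ⬝ᵥ v := by
    intro v hv
    rw [KolmoAux.Cmat_quad]
    set f : ℝ → ℝ := fun s => (Kolmo.E S s * S.A * (Kolmo.E S s)ᵀ).mulVec v ⬝ᵥ v with hf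
    have hfc : Continuous f :=
      ((KolmoAux.continuous_F S).matrix_mulVec continuous_const).dotProduct
        continuous_const
    have hfi : IntervalIntegrable f MeasureTheory.volume 0 t := hfc.intervalIntegrable 0 t
    rw [intervalIntegral.integral_pos_iff_support_of_nonneg_ae
      (Filter.Eventually.of_forall fun s => KolmoAux.q_nonneg S s v) hfi]
    refine ⟨ht, ?_⟩
    have hex : ∃ s₀ ∈ Set.Ioo (0:ℝ) t, f s₀ ≠ 0 := by
      by_contra hall
      push_neg at hall
      have hblock : ∀ s ∈ Set.Ioo (0:ℝ) t, ∀ i : Fin n, Kolmo.inBlock S.p 0 (i : ℕ) →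
          (Kolmo.E S s)ᵀ.mulVec v i = 0 := by
        intro s hs
        apply KolmoAux.block0_zero_of_quad_zero
        have hz := hall s hs
        rw [hf] at hz
        simp only at hz
        rw [KolmoAux.F_quad] at hz
        exact hz
      exact hv (KolmoAux.v_blocks_zero S v (KolmoAux.pow_coeff_zero S ht v hblock))
    obtain ⟨s₀, hs₀, hfs₀⟩ := hex
    have hopen : IsOpen (Function.support f ∩ Set.Ioo 0 t) :=
      hfc.isOpen_support.inter isOpen_Ioo
    have hpos := hopen.measure_pos MeasureTheory.volume
      ⟨s₀, Function.mem_support.mpr hfs₀, hs₀⟩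
    calc (0 : ℝ≥0∞) < _ := hpos
      _ ≤ _ := MeasureTheory.measure_mono
          (Set.inter_subset_inter_right _ Set.Ioo_subset_Ioc_self)
  have hpd : (Kolmo.Cmat S t).PosDef := by
    refine Matrix.PosDef.of_dotProduct_mulVec_pos (KolmoAux.Cmat_isHermitian S t) ?_
    intro v hv
    have hstar : star v = v := star_trivial v
    rw [hstar, dotProduct_comm]
    exact hkey v hv
  exact ⟨hpd, hpd.isUnit⟩
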